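/- arXiv:2109.11285 — 2 statements merged into one kernel-verified Lean document; each statement's English description precedes it below -/
import Mathlib

section
/- The bialgebra rule (Baw) between white and black nodes holds: W ∘ Z^{(2,1)}_{\vec 1} = (Z^{(2,1)}_{\vec 1} ⊗ Z^{(2,1)}_{\vec 1}) ∘ (id ⊗ σ ⊗ id) ∘ (W ⊗ W), where Z^{(2,1)}_{\vec 1} = ∑_j |j⟩⟨jj| is the phase-free white multiplication. -/
open TensorProduct

set_option synthInstance.maxHeartbeats 1000000 in
set_option maxHeartbeats 2000000 in
/-- (Baw) bialgebra rule between the white multiplication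
`Z = ∑_j |j⟩⟨jj|` and the black comultiplication `W`:
`W ∘ Z = (Z ⊗ Z) ∘ (id ⊗ σ ⊗ id) ∘ (W ⊗ W)`. -/
theorem white_black_bialgebra (n : ℕ)
    (W : (Fin (n+2) → ℂ) →ₗ[ℂ] (Fin (n+2) → ℂ) ⊗[ℂ] (Fin (n+2) → ℂ))
    (Z : (Fin (n+2) → ℂ) ⊗[ℂ] (Fin (n+2) → ℂ) →ₗ[ℂ] (Fin (n+2) → ℂ))
    (hW0 : W (Pi.single 0 1) = (Pi.single 0 1 : Fin (n+2) → ℂ) ⊗ₜ[ℂ] (Pi.single 0 1 : Fin (n+2) → ℂ))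
    (hWi : ∀ i : Fin (n+2), i ≠ 0 →
      W (Pi.single i 1) = (Pi.single 0 1 : Fin (n+2) → ℂ) ⊗ₜ[ℂ] (Pi.single i 1 : Fin (n+2) → ℂ)
        + (Pi.single i 1 : Fin (n+2) → ℂ) ⊗ₜ[ℂ] (Pi.single 0 1 : Fin (n+2) → ℂ))
    (hZ : ∀ j k : Fin (n+2),
      Z ((Pi.single j 1 : Fin (n+2) → ℂ) ⊗ₜ[ℂ] (Pi.single k 1 : Fin (n+2) → ℂ))
        = if j = k then (Pi.single j 1 : Fin (n+2) → ℂ) else 0) :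
    W ∘ₗ Z
      = (TensorProduct.map Z Z)
          ∘ₗ (TensorProduct.tensorTensorTensorComm ℂ (Fin (n+2) → ℂ) (Fin (n+2) → ℂ)
                (Fin (n+2) → ℂ) (Fin (n+2) → ℂ)).toLinearMap
          ∘ₗ (TensorProduct.map W W) := by
  apply Module.Basis.ext ((Pi.basisFun ℂ (Fin (n+2))).tensorProduct (Pi.basisFun ℂ (Fin (n+2))))
  rintro ⟨j, k⟩
  simp only [Module.Basis.tensorProduct_apply, Pi.basisFun_apply, LinearMap.comp_apply,
    LinearEquiv.coe_coe, TensorProduct.map_tmul, hZ]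
  by_cases hj : j = 0 <;> by_cases hk : k = 0
  · subst hj; subst hk
    simp [hW0, TensorProduct.tensorTensorTensorComm_tmul, hZ]
  · subst hj
    rw [if_neg (fun h => hk h.symm), hW0, hWi k hk]
    simp only [TensorProduct.tmul_add, LinearEquiv.map_add, LinearEquiv.map_zero, map_add, map_zero,
      TensorProduct.tensorTensorTensorComm_tmul, TensorProduct.map_tmul, hZ]
    simp [hk, Ne.symm hk]
  · subst hk
    rw [if_neg hj, hW0, hWi j hj]
    simp only [TensorProduct.add_tmul, LinearEquiv.map_add, LinearEquiv.map_zero, map_add, map_zero,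
      TensorProduct.tensorTensorTensorComm_tmul, TensorProduct.map_tmul, hZ]
    simp [hj, Ne.symm hj]
  · by_cases hjk : j = k
    · subst hjk
      rw [if_pos rfl, hWi j hj]
      simp only [TensorProduct.add_tmul, TensorProduct.tmul_add, LinearEquiv.map_add, map_add,
        TensorProduct.tensorTensorTensorComm_tmul, TensorProduct.map_tmul, hZ]
      simp [hj, Ne.symm hj]
    · rw [if_neg hjk, hWi j hj, hWi k hk]
      simp only [TensorProduct.add_tmul, TensorProduct.tmul_add, LinearEquiv.map_add, map_add,
        TensorProduct.tensorTensorTensorComm_tmul, TensorProduct.map_tmul, hZ]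
      simp [hj, hk, hjk, Ne.symm hj, Ne.symm hk, Ne.symm hjk]
end

section
/- For d ≥ 3, the black node W fails the bialgebra law: W ∘ W† ≠ (W† ⊗ W†) ∘ (id ⊗ σ ⊗ id) ∘ (W ⊗ W) as linear maps ℂ^d⊗ℂ^d → ℂ^d⊗ℂ^d. -/
open TensorProduct

/-!
Evaluate both sides on `|1⟩ ⊗ |1⟩`. Since `W† |11⟩ = 0`, the left side vanishes. On the right,
`W |1⟩ ⊗ W |1⟩ = (|01⟩ + |10⟩) ⊗ (|01⟩ + |10⟩)`; after the middle swap, the two cross terms become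
`W† |01⟩ ⊗ W† |10⟩` and `W† |10⟩ ⊗ W† |01⟩`, each equal to `|11⟩`, while the other two terms contain
the factor `W† |11⟩ = 0`. So the right side is `2 |11⟩ ≠ 0`.
-/

section BialgebraLaw

variable {R V : Type*} [CommRing R] [AddCommGroup V] [Module R V]
  (W : V →ₗ[R] V ⊗[R] V) (Wd : V ⊗[R] V →ₗ[R] V)

theorem bialgebra_rhs_tmul {z x y : V}
    (hx : W x = z ⊗ₜ x + x ⊗ₜ z) (hy : W y = z ⊗ₜ y + y ⊗ₜ z)
    (hzy : Wd (z ⊗ₜ y) = y) (hxz : Wd (x ⊗ₜ z) = x) (hxy : Wd (x ⊗ₜ y) = 0) :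
    (map Wd Wd ∘ₗ (tensorTensorTensorComm R V V V V).toLinearMap ∘ₗ map W W) (x ⊗ₜ y)
      = x ⊗ₜ y + y ⊗ₜ x := by
  simp only [LinearMap.comp_apply, map_tmul, hx, hy, add_tmul, tmul_add, map_add,
    LinearEquiv.coe_coe, tensorTensorTensorComm_tmul, hzy, hxz, hxy, tmul_zero, zero_tmul,
    zero_add, add_zero]

theorem ne_bialgebra_rhs_of_tmul {z x : V}
    (hx : W x = z ⊗ₜ x + x ⊗ₜ z) (hzx : Wd (z ⊗ₜ x) = x) (hxz : Wd (x ⊗ₜ z) = x)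
    (hxx : Wd (x ⊗ₜ x) = 0) (hne : x ⊗ₜ[R] x + x ⊗ₜ x ≠ 0) :
    W ∘ₗ Wd ≠ map Wd Wd ∘ₗ (tensorTensorTensorComm R V V V V).toLinearMap ∘ₗ map W W := by
  intro h
  have hlhs : (W ∘ₗ Wd) (x ⊗ₜ x) = 0 := by simp [hxx]
  rw [h, bialgebra_rhs_tmul W Wd hx hx hzx hxz hxx] at hlhs
  exact hne hlhs

end BialgebraLaw

theorem single_tmul_single_add_self_ne_zero {ι : Type*} [Fintype ι] [DecidableEq ι] (i : ι) :
    (Pi.single i 1 : ι → ℂ) ⊗ₜ[ℂ] (Pi.single i 1 : ι → ℂ) + Pi.single i 1 ⊗ₜ Pi.single i 1 ≠ 0 := by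
  rw [← two_smul ℂ]
  refine smul_ne_zero two_ne_zero ?_
  simpa [Module.Basis.tensorProduct_apply] using
    ((Pi.basisFun ℂ ι).tensorProduct (Pi.basisFun ℂ ι)).ne_zero (i, i)

theorem black_no_bialgebra_general (n : ℕ)
    (W : (Fin (n+3) → ℂ) →ₗ[ℂ] (Fin (n+3) → ℂ) ⊗[ℂ] (Fin (n+3) → ℂ))
    (Wd : (Fin (n+3) → ℂ) ⊗[ℂ] (Fin (n+3) → ℂ) →ₗ[ℂ] (Fin (n+3) → ℂ))
    (hWi : ∀ i : Fin (n+3), i ≠ 0 →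
      W (Pi.single i 1) = (Pi.single 0 1 : Fin (n+3) → ℂ) ⊗ₜ[ℂ] (Pi.single i 1 : Fin (n+3) → ℂ)
        + (Pi.single i 1 : Fin (n+3) → ℂ) ⊗ₜ[ℂ] (Pi.single 0 1 : Fin (n+3) → ℂ))
    (hWd : ∀ j k : Fin (n+3),
      Wd ((Pi.single j 1 : Fin (n+3) → ℂ) ⊗ₜ[ℂ] (Pi.single k 1 : Fin (n+3) → ℂ))
        = if j = 0 then (Pi.single k 1 : Fin (n+3) → ℂ)
          else if k = 0 then (Pi.single j 1 : Fin (n+3) → ℂ) else 0) :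
    W ∘ₗ Wd
      ≠ (TensorProduct.map Wd Wd)
          ∘ₗ (TensorProduct.tensorTensorTensorComm ℂ (Fin (n+3) → ℂ) (Fin (n+3) → ℂ)
                (Fin (n+3) → ℂ) (Fin (n+3) → ℂ)).toLinearMap
          ∘ₗ (TensorProduct.map W W) := by
  have h1 : (1 : Fin (n+3)) ≠ 0 := Fin.zero_lt_one.ne'
  refine ne_bialgebra_rhs_of_tmul W Wd (hWi 1 h1) ?_ ?_ ?_ (single_tmul_single_add_self_ne_zero 1)
  · simpa using hWd 0 1
  · simpa [h1] using hWd 1 0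
  · simpa [h1] using hWd 1 1

/-- For `d ≥ 3`, the black node fails the bialgebra law:
`W ∘ W† ≠ (W† ⊗ W†) ∘ (id ⊗ σ ⊗ id) ∘ (W ⊗ W)`. -/
theorem black_no_bialgebra (n : ℕ)
    (W : (Fin (n+3) → ℂ) →ₗ[ℂ] (Fin (n+3) → ℂ) ⊗[ℂ] (Fin (n+3) → ℂ))
    (Wd : (Fin (n+3) → ℂ) ⊗[ℂ] (Fin (n+3) → ℂ) →ₗ[ℂ] (Fin (n+3) → ℂ))
    (hW0 : W (Pi.single 0 1) = (Pi.single 0 1 : Fin (n+3) → ℂ) ⊗ₜ[ℂ] (Pi.single 0 1 : Fin (n+3) → ℂ))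
    (hWi : ∀ i : Fin (n+3), i ≠ 0 →
      W (Pi.single i 1) = (Pi.single 0 1 : Fin (n+3) → ℂ) ⊗ₜ[ℂ] (Pi.single i 1 : Fin (n+3) → ℂ)
        + (Pi.single i 1 : Fin (n+3) → ℂ) ⊗ₜ[ℂ] (Pi.single 0 1 : Fin (n+3) → ℂ))
    (hWd : ∀ j k : Fin (n+3),
      Wd ((Pi.single j 1 : Fin (n+3) → ℂ) ⊗ₜ[ℂ] (Pi.single k 1 : Fin (n+3) → ℂ))
        = if j = 0 then (Pi.single k 1 : Fin (n+3) → ℂ)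
          else if k = 0 then (Pi.single j 1 : Fin (n+3) → ℂ) else 0) :
    W ∘ₗ Wd
      ≠ (TensorProduct.map Wd Wd)
          ∘ₗ (TensorProduct.tensorTensorTensorComm ℂ (Fin (n+3) → ℂ) (Fin (n+3) → ℂ)
                (Fin (n+3) → ℂ) (Fin (n+3) → ℂ)).toLinearMap
          ∘ₗ (TensorProduct.map W W) :=
  black_no_bialgebra_general n W Wd hWi hWd
end
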